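/- Let V be a finite-dimensional real vector space, γ a symmetric bilinear form on V, ℓ a linear functional on V, and ℓ⁽²⁾ ∈ ℝ, and let 𝒜 be the associated symmetric bilinear form on V × ℝ. Then the following are equivalent: (a) 𝒜 is nondegenerate and the radical Rad γ is nonzero; (b) Rad γ is one-dimensional and ℓ(e) ≠ 0 for every nonzero vector e ∈ Rad γ. (This is the pointwise criterion characterizing null metric hypersurface data.) -/

import Mathlib

/-!
Here `Rad γ = ker γ`. If `e ∈ Rad γ` and `ℓ e = 0`, then `(e, 0)` is `𝒜`-orthogonal to
everything, so nondegeneracy of `𝒜` makes `ℓ` injective on `Rad γ`, which therefore has dimension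
at most one. Conversely, let `(W, a)` be `𝒜`-orthogonal to everything and pick `e ∈ Rad γ` with
`ℓ e ≠ 0`: pairing with `(e, 0)` gives `a ℓ(e) = 0`, so `a = 0`; then pairing with `(Z, 0)` and
`(0, 1)` gives `W ∈ Rad γ` and `ℓ W = 0`, so `W = 0`. As `𝒜` is symmetric, separating on one side
is nondegeneracy.
-/

open Module

/-- The bilinear form `𝒜` on `V × ℝ` associated to metric hypersurface data `(γ, ℓ, ℓ⁽²⁾)`:
`𝒜((W,a),(Z,b)) = γ(W,Z) + a·ℓ(Z) + b·ℓ(W) + a·b·ℓ⁽²⁾`. -/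
noncomputable def Amap {V : Type*} [AddCommGroup V] [Module ℝ V]
    (γ : LinearMap.BilinForm ℝ V) (ℓ : Module.Dual ℝ V) (ℓ2 : ℝ) :
    LinearMap.BilinForm ℝ (V × ℝ) :=
  LinearMap.mk₂ ℝ
    (fun p q => γ p.1 q.1 + p.2 * ℓ q.1 + q.2 * ℓ p.1 + p.2 * q.2 * ℓ2)
    (fun p p' q => by simp [map_add, LinearMap.add_apply]; ring)
    (fun c p q => by simp [map_smul, LinearMap.smul_apply, smul_eq_mul]; ring)
    (fun p q q' => by simp [map_add, LinearMap.add_apply]; ring)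
    (fun c p q => by simp [map_smul, LinearMap.smul_apply, smul_eq_mul]; ring)

open LinearMap

theorem finrank_eq_one_of_disjoint_ker {K V : Type*} [Field K] [AddCommGroup V] [Module K V]
    {W : Submodule K V} {f : Dual K V} (hW : W ≠ ⊥) (hWf : Disjoint W (ker f)) :
    finrank K W = 1 := by
  have hinj : Function.Injective (f.domRestrict W) := injective_domRestrict_iff.mpr hWf
  have : FiniteDimensional K W := .of_injective _ hinj
  have : Nontrivial W := Submodule.nontrivial_iff_ne_bot.mpr hW
  have hle : finrank K W ≤ 1 := finrank_self K ▸ finrank_le_finrank_of_injective hinj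
  have hpos : 0 < finrank K W := finrank_pos
  omega

section Amap

variable {V : Type*} [AddCommGroup V] [Module ℝ V]
  {γ : LinearMap.BilinForm ℝ V} {ℓ : Dual ℝ V} {ℓ2 : ℝ}

@[simp]
theorem Amap_apply (p q : V × ℝ) :
    Amap γ ℓ ℓ2 p q = γ p.1 q.1 + p.2 * ℓ q.1 + q.2 * ℓ p.1 + p.2 * q.2 * ℓ2 :=
  rfl

theorem Amap_isSymm (hγ : γ.IsSymm) : (Amap γ ℓ ℓ2).IsSymm :=
  ⟨fun p q => by simp only [Amap_apply, hγ.eq p.1 q.1]; ring⟩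

theorem disjoint_ker_of_separatingLeft_Amap (hA : (Amap γ ℓ ℓ2).SeparatingLeft) :
    Disjoint (ker γ) (ker ℓ) := by
  refine Submodule.disjoint_def.mpr fun e (he : γ e = 0) (hℓe : ℓ e = 0) => ?_
  have hA0 : ((e, 0) : V × ℝ) = 0 := hA _ fun q => by simp [he, hℓe]
  exact congrArg Prod.fst hA0

theorem separatingLeft_Amap_of_disjoint_ker (hγ : γ.IsSymm) (hker : ker γ ≠ ⊥)
    (hdisj : Disjoint (ker γ) (ker ℓ)) : (Amap γ ℓ ℓ2).SeparatingLeft := by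
  obtain ⟨e, he, he0⟩ := Submodule.exists_mem_ne_zero_of_ne_bot hker
  have hℓe : ℓ e ≠ 0 := fun h => he0 (Submodule.disjoint_def.mp hdisj e he h)
  rintro ⟨W, a⟩ hWa
  have hγW : ∀ Z, γ W Z + a * ℓ Z = 0 := fun Z => by simpa using hWa (Z, 0)
  have hℓW : ℓ W + a * ℓ2 = 0 := by simpa using hWa (0, 1)
  have ha : a = 0 := by
    have hγWe : γ W e = 0 := by rw [hγ.eq, he, LinearMap.zero_apply]
    simpa [hγWe, hℓe] using hγW e
  subst ha
  have hW : W ∈ ker γ := LinearMap.ext fun Z => by simpa using hγW Z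
  have hW0 : W = 0 := Submodule.disjoint_def.mp hdisj W hW (by simpa using hℓW)
  rw [hW0, Prod.mk_zero_zero]

end Amap

theorem nullMetricData_iff_general {V : Type*} [AddCommGroup V] [Module ℝ V]
    (γ : LinearMap.BilinForm ℝ V) (hγsym : ∀ X Y : V, γ X Y = γ Y X)
    (ℓ : Module.Dual ℝ V) (ℓ2 : ℝ) :
    ((Amap γ ℓ ℓ2).Nondegenerate ∧ LinearMap.ker γ ≠ ⊥) ↔
      (Module.finrank ℝ (LinearMap.ker γ) = 1 ∧
        ∀ e ∈ LinearMap.ker γ, e ≠ 0 → ℓ e ≠ 0) := by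
  have hγ : γ.IsSymm := ⟨hγsym⟩
  have hℓ : (∀ e ∈ ker γ, e ≠ 0 → ℓ e ≠ 0) ↔ Disjoint (ker γ) (ker ℓ) := by
    simp only [Submodule.disjoint_def, mem_ker, not_imp_not]
  have hA : (Amap γ ℓ ℓ2).Nondegenerate ↔ (Amap γ ℓ ℓ2).SeparatingLeft :=
    IsRefl.nondegenerate_iff_separatingLeft (Amap_isSymm hγ).isRefl
  rw [hA, hℓ]
  constructor
  · rintro ⟨hsep, hker⟩
    have hdisj := disjoint_ker_of_separatingLeft_Amap hsep
    exact ⟨finrank_eq_one_of_disjoint_ker hker hdisj, hdisj⟩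
  · rintro ⟨hdim, hdisj⟩
    have hker : ker γ ≠ ⊥ := fun h => by rw [h, finrank_bot] at hdim; exact zero_ne_one hdim
    exact ⟨separatingLeft_Amap_of_disjoint_ker hγ hker hdisj, hker⟩

/-- Pointwise criterion for null metric hypersurface data: `𝒜` is nondegenerate with
`Rad γ ≠ 0` if and only if `Rad γ` is one-dimensional and `ℓ` does not vanish on any
nonzero element of `Rad γ`. -/
theorem nullMetricData_iff {V : Type*} [AddCommGroup V] [Module ℝ V]
    [FiniteDimensional ℝ V]
    (γ : LinearMap.BilinForm ℝ V) (hγsym : ∀ X Y : V, γ X Y = γ Y X)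
    (ℓ : Module.Dual ℝ V) (ℓ2 : ℝ) :
    ((Amap γ ℓ ℓ2).Nondegenerate ∧ LinearMap.ker γ ≠ ⊥) ↔
      (Module.finrank ℝ (LinearMap.ker γ) = 1 ∧
        ∀ e ∈ LinearMap.ker γ, e ≠ 0 → ℓ e ≠ 0) :=
  nullMetricData_iff_general γ hγsym ℓ ℓ2
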